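/- The spin-Clifford relation for a consecutive spin projection and spin injection: for all x ∈ V and a ∈ Δ, ι(π(x ⊗ a)) + P((id_V ⊗ ι)(x ⊗ a)) = 2 (x ⊗ a), where P : V ⊗ V ⊗ Δ → V ⊗ Δ is the linear map u ⊗ y ⊗ b ↦ y ⊗ π(u ⊗ b) (i.e. the spin projection applied to the first tensor factor). -/

import Mathlib

noncomputable section

open TensorProduct

/-- `W = ℂ^m`. -/
abbrev SpinW (m : ℕ) : Type := Fin m → ℂ

/-- `Δ = ⋀ W`, the exterior algebra of `W`. -/
abbrev SpinDelta (m : ℕ) : Type := ExteriorAlgebra ℂ (SpinW m)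

/-- `V = W ⊕ W* ⊕ ℂe`. -/
abbrev SpinV (m : ℕ) : Type := SpinW m × Module.Dual ℂ (SpinW m) × ℂ

/-- The standard basis vector `w_i` of `W`. -/
def wB (m : ℕ) (i : Fin m) : SpinW m := Pi.single i 1

/-- The dual basis vector `w_i*` of `W*`. -/
def wD (m : ℕ) (i : Fin m) : Module.Dual ℂ (SpinW m) := LinearMap.proj i

/-- `w_i` regarded as an element of `V`. -/
def wV (m : ℕ) (i : Fin m) : SpinV m := (wB m i, 0, 0)

/-- `w_i*` regarded as an element of `V`. -/
def wsV (m : ℕ) (i : Fin m) : SpinV m := (0, wD m i, 0)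

/-- `e` regarded as an element of `V`. -/
def eV (m : ℕ) : SpinV m := (0, 0, 1)

/-- `X_v : Δ → Δ`, left exterior multiplication by `v ∈ W`. -/
def Xop (m : ℕ) (v : SpinW m) : SpinDelta m →ₗ[ℂ] SpinDelta m :=
  LinearMap.mulLeft ℂ (ExteriorAlgebra.ι ℂ v)

/-- `D_λ : Δ → Δ`, the interior product with `λ ∈ W*`;
it satisfies `D_λ(v₁ ∧ ⋯ ∧ v_k) = Σ (−1)^{i−1} λ(v_i) v₁ ∧ ⋯ ∧ v̂_i ∧ ⋯ ∧ v_k`. -/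
def Dop (m : ℕ) (lam : Module.Dual ℂ (SpinW m)) : SpinDelta m →ₗ[ℂ] SpinDelta m :=
  CliffordAlgebra.contractLeft (Q := (0 : QuadraticForm ℂ (SpinW m))) lam

/-- The grading operator `D : Δ → Δ` acting by `(−1)^k` on `⋀^k W`. -/
def Gop (m : ℕ) : SpinDelta m →ₗ[ℂ] SpinDelta m :=
  (CliffordAlgebra.involute (Q := (0 : QuadraticForm ℂ (SpinW m)))).toLinearMap

/-- Projection `V → W`. -/
def pW (m : ℕ) : SpinV m →ₗ[ℂ] SpinW m := LinearMap.fst ℂ _ _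

/-- Projection `V → W*`. -/
def pD (m : ℕ) : SpinV m →ₗ[ℂ] Module.Dual ℂ (SpinW m) :=
  (LinearMap.fst ℂ _ ℂ).comp (LinearMap.snd ℂ (SpinW m) _)

/-- Projection `V → ℂ` (the `e`-coordinate). -/
def pC (m : ℕ) : SpinV m →ₗ[ℂ] ℂ :=
  (LinearMap.snd ℂ _ ℂ).comp (LinearMap.snd ℂ (SpinW m) _)

/-- Inclusion `W → V`. -/
def iW (m : ℕ) : SpinW m →ₗ[ℂ] SpinV m :=
  LinearMap.inl ℂ (SpinW m) (Module.Dual ℂ (SpinW m) × ℂ)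

/-- Inclusion `W* → V`. -/
def iD (m : ℕ) : Module.Dual ℂ (SpinW m) →ₗ[ℂ] SpinV m :=
  (LinearMap.inr ℂ (SpinW m) _).comp (LinearMap.inl ℂ (Module.Dual ℂ (SpinW m)) ℂ)

/-- Inclusion `ℂe → V`. -/
def iC (m : ℕ) : ℂ →ₗ[ℂ] SpinV m :=
  (LinearMap.inr ℂ (SpinW m) _).comp (LinearMap.inr ℂ (Module.Dual ℂ (SpinW m)) ℂ)

/-- The symmetric bilinear form `ω` on `V`:
`ω((u,η,c),(u',η',c')) = η'(u) + η(u') + c·c'`; so `ω(w_i, w_j*) = δ_{ij}`,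
`ω(e,e) = 1`, `W` and `W*` are isotropic and `e` is orthogonal to both. -/
def omegaB (m : ℕ) : SpinV m →ₗ[ℂ] SpinV m →ₗ[ℂ] ℂ :=
  ((((LinearMap.llcomp ℂ (SpinV m) (SpinW m) ℂ).flip (pW m)).comp (pD m)).flip
  + ((LinearMap.llcomp ℂ (SpinV m) (SpinW m) ℂ).flip (pW m)).comp (pD m))
  + (pC m).smulRight (pC m)

/-- The spin projection `π : V ⊗ Δ → Δ` as a bilinear map:
`(v,λ,c) ⊗ a ↦ √2 X_v(a) + √2 D_λ(a) + c D(a)`. -/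
def piB (m : ℕ) : SpinV m →ₗ[ℂ] SpinDelta m →ₗ[ℂ] SpinDelta m :=
  (Real.sqrt 2 : ℂ) • (((LinearMap.mul ℂ (SpinDelta m)).comp ((ExteriorAlgebra.ι ℂ).comp (pW m)))
      + (CliffordAlgebra.contractLeft (Q := (0 : QuadraticForm ℂ (SpinW m)))).comp (pD m))
  + (pC m).smulRight (Gop m)

/-- The spin projection `π : V ⊗ Δ → Δ`. -/
def piMap (m : ℕ) : SpinV m ⊗[ℂ] SpinDelta m →ₗ[ℂ] SpinDelta m :=
  TensorProduct.lift (piB m)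

/-- The spin injection `ι : Δ → V ⊗ Δ`,
`a ↦ √2 Σᵢ (wᵢ ⊗ D_{wᵢ*}(a) + wᵢ* ⊗ X_{wᵢ}(a)) + e ⊗ D(a)`. -/
def iotaMap (m : ℕ) : SpinDelta m →ₗ[ℂ] SpinV m ⊗[ℂ] SpinDelta m :=
  (Real.sqrt 2 : ℂ) • (∑ i : Fin m,
      ((TensorProduct.mk ℂ (SpinV m) (SpinDelta m) (wV m i)).comp (Dop m (wD m i))
        + (TensorProduct.mk ℂ (SpinV m) (SpinDelta m) (wsV m i)).comp (Xop m (wB m i))))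
  + (TensorProduct.mk ℂ (SpinV m) (SpinDelta m) (eV m)).comp (Gop m)

/-- The invariant element `θ = Σᵢ (wᵢ ⊗ wᵢ* + wᵢ* ⊗ wᵢ) + e ⊗ e ∈ V ⊗ V`. -/
def theta (m : ℕ) : SpinV m ⊗[ℂ] SpinV m :=
  (∑ i : Fin m, (wV m i ⊗ₜ wsV m i + wsV m i ⊗ₜ wV m i)) + eV m ⊗ₜ eV m

/-- Evaluation of a dual vector at `w ∈ W`. -/
def evalW (m : ℕ) (w : SpinW m) : Module.Dual ℂ (SpinW m) →ₗ[ℂ] ℂ :=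
  Module.Dual.eval ℂ (SpinW m) w

/-- `A_{v,w} : V → V`, with `A(u) = 0`, `A(η) = η(w)v − η(v)w`, `A(e) = 0`. -/
def Amap (m : ℕ) (v w : SpinW m) : SpinV m →ₗ[ℂ] SpinV m :=
  (iW m) ∘ₗ (((evalW m w).smulRight v - (evalW m v).smulRight w) ∘ₗ pD m)

/-- `B_λ : V → V`, with `B(u) = λ(u)e`, `B(η) = 0`, `B(e) = −λ`. -/
def Bmap (m : ℕ) (lam : Module.Dual ℂ (SpinW m)) : SpinV m →ₗ[ℂ] SpinV m :=
  (iC m) ∘ₗ (lam ∘ₗ pW m) - (iD m) ∘ₗ ((pC m).smulRight lam)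

/-- `C_v : V → V`, with `C(u) = 0`, `C(η) = −η(v)e`, `C(e) = v`. -/
def Cmap (m : ℕ) (v : SpinW m) : SpinV m →ₗ[ℂ] SpinV m :=
  (iW m) ∘ₗ ((pC m).smulRight v) - (iC m) ∘ₗ ((evalW m v) ∘ₗ pD m)

/-- `H_{v,λ} : V → V`, with `H(u) = λ(u)v`, `H(η) = −η(v)λ`, `H(e) = 0`. -/
def Hmap (m : ℕ) (v : SpinW m) (lam : Module.Dual ℂ (SpinW m)) : SpinV m →ₗ[ℂ] SpinV m :=
  (iW m) ∘ₗ ((lam ∘ₗ pW m).smulRight v) - (iD m) ∘ₗ (((evalW m v) ∘ₗ pD m).smulRight lam)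

/-- `E_{λ,μ} : V → V`, with `E(u) = μ(u)λ − λ(u)μ`, `E(η) = 0`, `E(e) = 0`. -/
def Emap (m : ℕ) (lam mu : Module.Dual ℂ (SpinW m)) : SpinV m →ₗ[ℂ] SpinV m :=
  (iD m) ∘ₗ ((mu ∘ₗ pW m).smulRight lam - (lam ∘ₗ pW m).smulRight mu)

/-- The contraction `ω ⊗ id_Δ : V ⊗ (V ⊗ Δ) → Δ`, `x ⊗ y ⊗ b ↦ ω(x,y) b`. -/
def contrMap (m : ℕ) : SpinV m ⊗[ℂ] (SpinV m ⊗[ℂ] SpinDelta m) →ₗ[ℂ] SpinDelta m :=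
  (TensorProduct.lid ℂ (SpinDelta m)).toLinearMap
    ∘ₗ (TensorProduct.map (TensorProduct.lift (omegaB m)) LinearMap.id)
    ∘ₗ (TensorProduct.assoc ℂ (SpinV m) (SpinV m) (SpinDelta m)).symm.toLinearMap

/-- The swap `τ ⊗ id_Δ : V ⊗ (V ⊗ Δ) → V ⊗ (V ⊗ Δ)`, `x ⊗ y ⊗ b ↦ y ⊗ x ⊗ b`. -/
def swapMap (m : ℕ) :
    SpinV m ⊗[ℂ] (SpinV m ⊗[ℂ] SpinDelta m) →ₗ[ℂ] SpinV m ⊗[ℂ] (SpinV m ⊗[ℂ] SpinDelta m) :=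
  (TensorProduct.assoc ℂ (SpinV m) (SpinV m) (SpinDelta m)).toLinearMap
    ∘ₗ (LinearMap.rTensor (SpinDelta m) (TensorProduct.comm ℂ (SpinV m) (SpinV m)).toLinearMap)
    ∘ₗ (TensorProduct.assoc ℂ (SpinV m) (SpinV m) (SpinDelta m)).symm.toLinearMap

/-! Write `π_x = π(x ⊗ ·)`. Summand by summand, `ι(π_x a) + (id ⊗ π_x)(ι a)` equals
`√2 Σᵢ (wᵢ ⊗ {D_{wᵢ*}, π_x} a + wᵢ* ⊗ {X_{wᵢ}, π_x} a) + e ⊗ {D, π_x} a`. Since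
`{D_λ, X_v} = λ(v)`, the `X_v` anticommute among themselves, so do the `D_λ`, and the grading
anticommutes with all of them, these anticommutators are the scalars `√2 vᵢ`, `√2 η(wᵢ)` and `2c`
for `x = (v, η, c)`; and `2x = Σᵢ (2vᵢ wᵢ + 2η(wᵢ) wᵢ*) + 2c e`. -/

open CliffordAlgebra

theorem CliffordAlgebra.involute_contractLeft {R M : Type*} [CommRing R] [AddCommGroup M]
    [Module R M] {Q : QuadraticForm R M} (d : Module.Dual R M) (x : CliffordAlgebra Q) :
    involute (contractLeft d x) = -contractLeft d (involute x) := by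
  induction x using CliffordAlgebra.left_induction with
  | algebraMap r => simp
  | add x y hx hy => simp only [map_add, hx, hy, neg_add]
  | ι_mul x v hx =>
    simp only [map_mul, involute_ι, neg_mul, map_neg, contractLeft_ι_mul, map_sub, map_smul, hx,
      mul_neg, neg_neg, neg_sub]

theorem Complex.ofReal_sqrt_two_mul_self : (√2 : ℂ) * (√2 : ℂ) = 2 := by
  rw [← Complex.ofReal_mul, Real.mul_self_sqrt zero_le_two, Complex.ofReal_ofNat]

namespace SpinRepresentation

variable {m : ℕ}

theorem piMap_tmul (x : SpinV m) (b : SpinDelta m) : piMap m (x ⊗ₜ b) = piB m x b :=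
  lift.tmul _ _

theorem piB_apply (x : SpinV m) (b : SpinDelta m) :
    piB m x b = (√2 : ℂ) • Xop m x.1 b + (√2 : ℂ) • Dop m x.2.1 b + x.2.2 • Gop m b := by
  simp [piB, Xop, Dop, pW, pD, pC, smul_add]

theorem Dop_piB_add_piB_Dop (d : Module.Dual ℂ (SpinW m)) (x : SpinV m) (a : SpinDelta m) :
    Dop m d (piB m x a) + piB m x (Dop m d a) = ((√2 : ℂ) * d x.1) • a := by
  simp only [piB_apply, Xop, Dop, Gop, ExteriorAlgebra.ι, map_add, map_smul,
    LinearMap.mulLeft_apply, contractLeft_ι_mul, AlgHom.toLinearMap_apply, involute_contractLeft,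
    contractLeft_comm x.2.1 d]
  module

theorem Xop_piB_add_piB_Xop (w : SpinW m) (x : SpinV m) (a : SpinDelta m) :
    Xop m w (piB m x a) + piB m x (Xop m w a) = ((√2 : ℂ) * x.2.1 w) • a := by
  have anticomm : ExteriorAlgebra.ι ℂ x.1 * (ExteriorAlgebra.ι ℂ w * a)
      = -(ExteriorAlgebra.ι ℂ w * (ExteriorAlgebra.ι ℂ x.1 * a)) := by
    rw [← mul_assoc, ← mul_assoc, ← neg_mul,
      eq_neg_of_add_eq_zero_left (ExteriorAlgebra.ι_add_mul_swap x.1 w)]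
  simp only [piB_apply, Xop, Dop, Gop, LinearMap.mulLeft_apply, AlgHom.toLinearMap_apply,
    mul_add, mul_smul_comm, anticomm, map_mul, involute_ι, neg_mul]
  simp only [ExteriorAlgebra.ι, contractLeft_ι_mul]
  module

theorem Gop_piB_add_piB_Gop (x : SpinV m) (a : SpinDelta m) :
    Gop m (piB m x a) + piB m x (Gop m a) = (2 * x.2.2) • a := by
  simp only [piB_apply, Xop, Dop, Gop, ExteriorAlgebra.ι, LinearMap.mulLeft_apply,
    AlgHom.toLinearMap_apply, map_add, map_smul, map_mul, involute_ι, neg_mul, involute_contractLeft,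
    involute_involute]
  module

theorem iotaMap_apply (b : SpinDelta m) :
    iotaMap m b = (√2 : ℂ) • ∑ i, (wV m i ⊗ₜ Dop m (wD m i) b + wsV m i ⊗ₜ Xop m (wB m i) b)
      + eV m ⊗ₜ Gop m b := by
  simp [iotaMap, LinearMap.sum_apply]
  norm_cast

theorem lTensor_piMap_swapMap_tmul (x : SpinV m) (t : SpinV m ⊗[ℂ] SpinDelta m) :
    (piMap m).lTensor (SpinV m) (swapMap m (x ⊗ₜ t)) = (piB m x).lTensor (SpinV m) t := by
  induction t using TensorProduct.induction_on with
  | zero => simp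
  | tmul y b => simp [swapMap, piMap_tmul]
  | add t t' ht ht' => simp only [tmul_add, map_add, ht, ht']

theorem iotaMap_add_lTensor_iotaMap (T : SpinDelta m →ₗ[ℂ] SpinDelta m) (a : SpinDelta m) :
    iotaMap m (T a) + T.lTensor (SpinV m) (iotaMap m a)
      = (√2 : ℂ) • ∑ i, (wV m i ⊗ₜ (Dop m (wD m i) (T a) + T (Dop m (wD m i) a))
          + wsV m i ⊗ₜ (Xop m (wB m i) (T a) + T (Xop m (wB m i) a)))
        + eV m ⊗ₜ (Gop m (T a) + T (Gop m a)) := by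
  simp only [iotaMap_apply, map_add, map_smul, map_sum, LinearMap.lTensor_tmul, tmul_add,
    Finset.sum_add_distrib, smul_add]
  abel

theorem sum_wV_wsV_add_eV (x : SpinV m) :
    ∑ i, (wD m i x.1 • wV m i + x.2.1 (wB m i) • wsV m i) + x.2.2 • eV m = x := by
  obtain ⟨v, lam, c⟩ := x
  refine Prod.ext ?_ (Prod.ext ?_ ?_)
  · ext j
    simp [wV, wsV, eV, wB, wD, Prod.fst_sum, Pi.single_apply]
  · refine (Pi.basisFun ℂ (Fin m)).ext fun j => ?_
    simp [wV, wsV, eV, wB, wD, Prod.fst_sum, Prod.snd_sum, Pi.single_apply, LinearMap.sum_apply]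
  · simp [wV, wsV, eV, Prod.snd_sum]

end SpinRepresentation

open SpinRepresentation

theorem spin_clifford_relation_projection_injection_general (m : ℕ)
    (x : SpinV m) (a : SpinDelta m) :
    iotaMap m (piMap m (x ⊗ₜ a))
        + LinearMap.lTensor (SpinV m) (piMap m) (swapMap m (x ⊗ₜ (iotaMap m a)))
      = (2 : ℂ) • (x ⊗ₜ a) := by
  rw [piMap_tmul, lTensor_piMap_swapMap_tmul, iotaMap_add_lTensor_iotaMap]
  simp only [Dop_piB_add_piB_Dop, Xop_piB_add_piB_Xop, Gop_piB_add_piB_Gop]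
  conv_rhs => rw [← sum_wV_wsV_add_eV x]
  simp only [tmul_smul, ← smul_tmul', smul_add, Finset.smul_sum, add_tmul, sum_tmul, smul_smul,
    ← mul_assoc, Complex.ofReal_sqrt_two_mul_self]

/-- The spin-Clifford relation for a consecutive spin projection and spin injection:
for all `x ∈ V` and `a ∈ Δ`,
`ι(π(x ⊗ a)) + P((id_V ⊗ ι)(x ⊗ a)) = 2 (x ⊗ a)`, where
`P : V ⊗ V ⊗ Δ → V ⊗ Δ` is `u ⊗ y ⊗ b ↦ y ⊗ π(u ⊗ b)` (the spin projection applied to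
the first tensor factor); here `P = (id_V ⊗ π) ∘ (τ ⊗ id_Δ)`. -/
theorem spin_clifford_relation_projection_injection (m : ℕ) (hm : 1 ≤ m)
    (x : SpinV m) (a : SpinDelta m) :
    iotaMap m (piMap m (x ⊗ₜ a))
        + LinearMap.lTensor (SpinV m) (piMap m) (swapMap m (x ⊗ₜ (iotaMap m a)))
      = (2 : ℂ) • (x ⊗ₜ a) :=
  spin_clifford_relation_projection_injection_general m x a
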